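/- Let G^c be a 2-edge-colored cocktail party graph, let e be a critical pair for color 1 and f a critical pair for color 2 with e ∩ f ≠ ∅. Then V can be covered by two monochromatic stars, or by the vertex sets of two monochromatic subgraphs each of which is a blow-up of a 5-cycle (hence has diameter 2). In particular, V is covered by two monochromatic 2-reachable subsets. -/
import Mathlib


/-! Common setting: `V` is the vertex set, `m : V → V` is a fixed-point-free
involution pairing each vertex `v` with its unique non-neighbor `m v` (the
deleted perfect matching), and `c : V → V → Fin 2` is a symmetric edge
coloring.  Color `0` stands for color 1 (red), color `1` for color 2 (blue). -/

/-- Adjacency in the cocktail party graph: distinct and not matched. -/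
def cpAdj {V : Type*} (m : V → V) (u v : V) : Prop := u ≠ v ∧ m u ≠ v

/-- Adjacency in the color-`i` subgraph. -/
def adjC {V : Type*} (m : V → V) (c : V → V → Fin 2) (i : Fin 2) (u v : V) : Prop :=
  cpAdj m u v ∧ c u v = i

/-- `u` and `v` are at distance at most 2 in the color-`i` subgraph. -/
def reach2 {V : Type*} (m : V → V) (c : V → V → Fin 2) (i : Fin 2) (u v : V) : Prop :=
  u = v ∨ adjC m c i u v ∨ ∃ w, adjC m c i u w ∧ adjC m c i w v

/-- `X` is a 2-reachable subset of the color-`i` subgraph. -/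
def reachSet {V : Type*} (m : V → V) (c : V → V → Fin 2) (i : Fin 2) (X : Set V) : Prop :=
  ∀ x ∈ X, ∀ y ∈ X, reach2 m c i x y

/-- The monochromatic star of color `i` centered at `v` (as a vertex set). -/
def mStar {V : Type*} (m : V → V) (c : V → V → Fin 2) (i : Fin 2) (v : V) : Set V :=
  {v} ∪ {u | adjC m c i v u}

/-- The pair `(u, v)` is critical for color `i`: distance `> 2` in color `i`. -/
def critPair {V : Type*} (m : V → V) (c : V → V → Fin 2) (i : Fin 2) (u v : V) : Prop :=
  ¬ reach2 m c i u v

/-- `A` is covered by a spanning blow-up of a 5-cycle inside the color-`i`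
subgraph: five nonempty pairwise disjoint parts, with all edges between
cyclically consecutive parts present in color `i`. -/
def c5Blowup {V : Type*} (m : V → V) (c : V → V → Fin 2) (i : Fin 2)
    (A : Set V) : Prop :=
  ∃ P : Fin 5 → Set V, (∀ k, (P k).Nonempty) ∧
    (∀ k l, k ≠ l → P k ∩ P l = ∅) ∧ (⋃ k, P k) = A ∧
    ∀ k, ∀ a ∈ P k, ∀ b ∈ P (k + 1), adjC m c i a b

/-! ### Auxiliary lemmas -/

lemma fin2cases (i : Fin 2) : i = 0 ∨ i = 1 := by omega

lemma adjC_symm {V : Type*} {m : V → V} {c : V → V → Fin 2}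
    (hm : Function.Involutive m) (hc : ∀ u v, c u v = c v u)
    {i : Fin 2} {u v : V} (h : adjC m c i u v) : adjC m c i v u := by
  obtain ⟨⟨h1, h2⟩, h3⟩ := h
  refine ⟨⟨h1.symm, fun hmv => h2 ?_⟩, (hc v u).trans h3⟩
  rw [← hmv, hm]

lemma reach2_symm {V : Type*} {m : V → V} {c : V → V → Fin 2}
    (hm : Function.Involutive m) (hc : ∀ u v, c u v = c v u)
    {i : Fin 2} {u v : V} (h : reach2 m c i u v) : reach2 m c i v u := by
  rcases h with h | h | ⟨w, h1, h2⟩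
  · exact Or.inl h.symm
  · exact Or.inr (Or.inl (adjC_symm hm hc h))
  · exact Or.inr (Or.inr ⟨w, adjC_symm hm hc h2, adjC_symm hm hc h1⟩)

lemma critPair_symm {V : Type*} {m : V → V} {c : V → V → Fin 2}
    (hm : Function.Involutive m) (hc : ∀ u v, c u v = c v u)
    {i : Fin 2} {u v : V} (h : critPair m c i u v) : critPair m c i v u :=
  fun h2 => h (reach2_symm hm hc h2)

lemma reachSet_mStar {V : Type*} {m : V → V} {c : V → V → Fin 2}
    (hm : Function.Involutive m) (hc : ∀ u v, c u v = c v u)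
    (i : Fin 2) (v : V) : reachSet m c i (mStar m c i v) := by
  intro x hx y hy
  simp only [mStar, Set.mem_union, Set.mem_singleton_iff, Set.mem_setOf_eq] at hx hy
  rcases hx with hx | hx <;> rcases hy with hy | hy
  · exact Or.inl (hx.trans hy.symm)
  · subst hx; exact Or.inr (Or.inl hy)
  · subst hy; exact Or.inr (Or.inl (adjC_symm hm hc hx))
  · exact Or.inr (Or.inr ⟨v, adjC_symm hm hc hx, hy⟩)

lemma reachSet_c5 {V : Type*} {m : V → V} {c : V → V → Fin 2}
    (hm : Function.Involutive m) (hc : ∀ u v, c u v = c v u)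
    {i : Fin 2} {A : Set V} (h : c5Blowup m c i A) : reachSet m c i A := by
  obtain ⟨P, hne, -, hU, hadj⟩ := h
  have mem : ∀ x ∈ A, ∃ k, x ∈ P k := by
    intro x hx; rw [← hU] at hx; exact Set.mem_iUnion.mp hx
  have h1 : ∀ (k : Fin 5), ∀ a ∈ P k, ∀ b ∈ P (k + 1), reach2 m c i a b :=
    fun k a ha b hb => Or.inr (Or.inl (hadj k a ha b hb))
  have h0 : ∀ (k : Fin 5), ∀ a ∈ P k, ∀ b ∈ P k, reach2 m c i a b := by
    intro k a ha b hb
    obtain ⟨w, hw⟩ := hne (k + 1)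
    exact Or.inr (Or.inr ⟨w, hadj k a ha w hw, adjC_symm hm hc (hadj k b hb w hw)⟩)
  have h2 : ∀ (k : Fin 5), ∀ a ∈ P k, ∀ b ∈ P (k + 1 + 1), reach2 m c i a b := by
    intro k a ha b hb
    obtain ⟨w, hw⟩ := hne (k + 1)
    exact Or.inr (Or.inr ⟨w, hadj k a ha w hw, hadj (k + 1) w hw b hb⟩)
  intro x hx y hy
  obtain ⟨k, hk⟩ := mem x hx
  obtain ⟨l, hl⟩ := mem y hy
  have hcase : l = k ∨ l = k + 1 ∨ l = k + 1 + 1 ∨ k = l + 1 + 1 ∨ k = l + 1 := by omega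
  rcases hcase with h' | h' | h' | h' | h'
  · exact h0 k x hk y (h' ▸ hl)
  · exact h1 k x hk y (h' ▸ hl)
  · exact h2 k x hk y (h' ▸ hl)
  · exact reach2_symm hm hc (h2 l y hl x (h' ▸ hk))
  · exact reach2_symm hm hc (h1 l y hl x (h' ▸ hk))

/-- The common conclusion. -/
abbrev CoverGoal {V : Type*} (m : V → V) (c : V → V → Fin 2) : Prop :=
  ((∃ (i j : Fin 2) (u v : V), mStar m c i u ∪ mStar m c j v = Set.univ) ∨
    (∃ (A B : Set V) (i j : Fin 2), A ∪ B = Set.univ ∧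
      c5Blowup m c i A ∧ c5Blowup m c j B)) ∧
  (∃ (A B : Set V) (i j : Fin 2), A ∪ B = Set.univ ∧
    reachSet m c i A ∧ reachSet m c j B)

lemma goal_of_stars {V : Type*} {m : V → V} {c : V → V → Fin 2}
    (hm : Function.Involutive m) (hc : ∀ u v, c u v = c v u)
    (i j : Fin 2) (a b : V)
    (h : ∀ u, u = a ∨ adjC m c i a u ∨ u = b ∨ adjC m c j b u) : CoverGoal m c := by
  have hu : mStar m c i a ∪ mStar m c j b = Set.univ := by
    apply Set.eq_univ_iff_forall.mpr
    intro u
    rcases h u with h' | h' | h' | h'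
    · exact Or.inl (Or.inl h')
    · exact Or.inl (Or.inr h')
    · exact Or.inr (Or.inl h')
    · exact Or.inr (Or.inr h')
  exact ⟨Or.inl ⟨i, j, a, b, hu⟩,
    ⟨_, _, i, j, hu, reachSet_mStar hm hc i a, reachSet_mStar hm hc j b⟩⟩

lemma disjoint_of_classifier {V : Type*} (P : Fin 5 → Set V) (ρ : V → Fin 5)
    (h : ∀ k, ∀ w ∈ P k, ρ w = k) : ∀ k l, k ≠ l → P k ∩ P l = ∅ := by
  intro k l hkl
  ext w
  simp only [Set.mem_inter_iff, Set.mem_empty_iff_false, iff_false, not_and]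
  intro h1 h2
  exact hkl ((h k w h1).symm.trans (h l w h2))

lemma goal_of_c5 {V : Type*} {m : V → V} {c : V → V → Fin 2}
    (hm : Function.Involutive m) (hc : ∀ u v, c u v = c v u)
    (P Q : Fin 5 → Set V) (i j : Fin 2)
    (hPne : ∀ k, (P k).Nonempty) (hPdis : ∀ k l, k ≠ l → P k ∩ P l = ∅)
    (hPadj : ∀ k, ∀ a ∈ P k, ∀ b ∈ P (k + 1), adjC m c i a b)
    (hQne : ∀ k, (Q k).Nonempty) (hQdis : ∀ k l, k ≠ l → Q k ∩ Q l = ∅)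
    (hQadj : ∀ k, ∀ a ∈ Q k, ∀ b ∈ Q (k + 1), adjC m c j a b)
    (hcov : ∀ u, (∃ k, u ∈ P k) ∨ (∃ k, u ∈ Q k)) : CoverGoal m c := by
  have hA : c5Blowup m c i (⋃ k, P k) := ⟨P, hPne, hPdis, rfl, hPadj⟩
  have hB : c5Blowup m c j (⋃ k, Q k) := ⟨Q, hQne, hQdis, rfl, hQadj⟩
  have hU : (⋃ k, P k) ∪ (⋃ k, Q k) = Set.univ := by
    apply Set.eq_univ_iff_forall.mpr
    intro u
    rcases hcov u with ⟨k, h⟩ | ⟨k, h⟩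
    · exact Or.inl (Set.mem_iUnion.mpr ⟨k, h⟩)
    · exact Or.inr (Set.mem_iUnion.mpr ⟨k, h⟩)
  exact ⟨Or.inr ⟨_, _, i, j, hU, hA, hB⟩,
    ⟨_, _, i, j, hU, reachSet_c5 hm hc hA, reachSet_c5 hm hc hB⟩⟩

/-- The main construction: shared vertex `v`, red-critical partner `y`,
blue-critical partner `q`. -/
lemma cover_key {V : Type*} (m : V → V) (hm : Function.Involutive m)
    (hmf : ∀ v, m v ≠ v) (c : V → V → Fin 2) (hc : ∀ u v, c u v = c v u)
    (v y q : V) (hy : critPair m c 0 v y) (hq : critPair m c 1 v q) :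
    CoverGoal m c := by
  classical
  have hvy : v ≠ y := fun h => hy (Or.inl h)
  have hvq : v ≠ q := fun h => hq (Or.inl h)
  have hy2 : ¬ adjC m c 0 v y := fun h => hy (Or.inr (Or.inl h))
  have hq2 : ¬ adjC m c 1 v q := fun h => hq (Or.inr (Or.inl h))
  have hy3 : ∀ w, adjC m c 0 v w → adjC m c 0 w y → False :=
    fun w h1 h2 => hy (Or.inr (Or.inr ⟨w, h1, h2⟩))
  have hq3 : ∀ w, adjC m c 1 v w → adjC m c 1 w q → False :=
    fun w h1 h2 => hq (Or.inr (Or.inr ⟨w, h1, h2⟩))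
  by_cases hyz : y = m v
  · -- two blue stars at `v` and `m v`
    subst hyz
    apply goal_of_stars hm hc 1 1 v (m v)
    intro u
    by_cases h1 : u = v
    · exact Or.inl h1
    by_cases h2 : u = m v
    · exact Or.inr (Or.inr (Or.inl h2))
    have hadj : v ≠ u ∧ m v ≠ u := ⟨Ne.symm h1, fun h => h2 h.symm⟩
    rcases fin2cases (c v u) with h0 | h0
    · have hz : c u (m v) = 1 := by
        rcases fin2cases (c u (m v)) with hz | hz
        · exact (hy3 u ⟨hadj, h0⟩ ⟨⟨h2, fun h => h1 (hm.injective h)⟩, hz⟩).elim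
        · exact hz
      exact Or.inr (Or.inr (Or.inr ⟨⟨fun h => h2 h.symm, by rw [hm]; exact Ne.symm h1⟩,
        (hc (m v) u).trans hz⟩))
    · exact Or.inr (Or.inl ⟨hadj, h0⟩)
  by_cases hqz : q = m v
  · -- two red stars at `v` and `m v`
    subst hqz
    apply goal_of_stars hm hc 0 0 v (m v)
    intro u
    by_cases h1 : u = v
    · exact Or.inl h1
    by_cases h2 : u = m v
    · exact Or.inr (Or.inr (Or.inl h2))
    have hadj : v ≠ u ∧ m v ≠ u := ⟨Ne.symm h1, fun h => h2 h.symm⟩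
    rcases fin2cases (c v u) with h0 | h0
    · exact Or.inr (Or.inl ⟨hadj, h0⟩)
    · have hz : c u (m v) = 0 := by
        rcases fin2cases (c u (m v)) with hz | hz
        · exact hz
        · exact (hq3 u ⟨hadj, h0⟩ ⟨⟨h2, fun h => h1 (hm.injective h)⟩, hz⟩).elim
      exact Or.inr (Or.inr (Or.inr ⟨⟨fun h => h2 h.symm, by rw [hm]; exact Ne.symm h1⟩,
        (hc (m v) u).trans hz⟩))
  -- generic case: both `y` and `q` are neighbors of `v`
  have hadjvy : v ≠ y ∧ m v ≠ y := ⟨hvy, fun h => hyz h.symm⟩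
  have hadjvq : v ≠ q ∧ m v ≠ q := ⟨hvq, fun h => hqz h.symm⟩
  have cvy : c v y = 1 := by
    rcases fin2cases (c v y) with h | h
    · exact (hy2 ⟨hadjvy, h⟩).elim
    · exact h
  have cvq : c v q = 0 := by
    rcases fin2cases (c v q) with h | h
    · exact h
    · exact (hq2 ⟨hadjvq, h⟩).elim
  have hyq : y ≠ q := by
    intro h; rw [h, cvq] at cvy; exact absurd cvy (by decide)
  have hmyq : m y = q := by
    by_contra hne
    have hmqy : m q ≠ y := fun h => hne (by rw [← h, hm])
    have cqy : c q y = 1 := by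
      rcases fin2cases (c q y) with h | h
      · exact (hy3 q ⟨hadjvq, cvq⟩ ⟨⟨Ne.symm hyq, hmqy⟩, h⟩).elim
      · exact h
    exact hq3 y ⟨hadjvy, cvy⟩ ⟨⟨hyq, hne⟩, (hc y q).trans cqy⟩
  have hmq : m q = y := by rw [← hmyq, hm]
  have F0 : ∀ w, adjC m c 0 v w → w ≠ q → c w y = 1 := by
    intro w hw hwq
    have hwy : w ≠ y := by
      intro h; rw [h] at hw; rw [hw.2] at cvy; exact absurd cvy (by decide)
    have hmwy : m w ≠ y := by
      intro h; apply hwq; rw [← hm w, h, hmyq]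
    rcases fin2cases (c w y) with h | h
    · exact (hy3 w hw ⟨⟨hwy, hmwy⟩, h⟩).elim
    · exact h
  have F1 : ∀ w, adjC m c 1 v w → w ≠ y → c w q = 0 := by
    intro w hw hwy
    have hwq : w ≠ q := by
      intro h; rw [h] at hw; rw [hw.2] at cvq; exact absurd cvq (by decide)
    have hmwq : m w ≠ q := by
      intro h; apply hwy; rw [← hm w, h, hmq]
    rcases fin2cases (c w q) with h | h
    · exact h
    · exact (hq3 w hw ⟨⟨hwq, hmwq⟩, h⟩).elim
  -- if `m v` sees `y` in blue or `q` in red, two stars at `y`, `q` work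
  have staryq : c (m v) y = 1 ∨ c (m v) q = 0 → CoverGoal m c := by
    intro hz
    apply goal_of_stars hm hc 1 0 y q
    intro u
    by_cases huy : u = y
    · exact Or.inl huy
    by_cases huq : u = q
    · exact Or.inr (Or.inr (Or.inl huq))
    by_cases huv : u = v
    · rw [huv]
      exact Or.inr (Or.inl ⟨⟨Ne.symm hvy, by rw [hmyq]; exact Ne.symm hvq⟩,
        (hc y v).trans cvy⟩)
    by_cases huz : u = m v
    · rw [huz]
      rcases hz with hz | hz
      · exact Or.inr (Or.inl ⟨⟨hyz, by rw [hmyq]; exact hqz⟩, (hc y (m v)).trans hz⟩)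
      · exact Or.inr (Or.inr (Or.inr ⟨⟨hqz, by rw [hmq]; exact hyz⟩,
          (hc q (m v)).trans hz⟩))
    have hadj : v ≠ u ∧ m v ≠ u := ⟨Ne.symm huv, fun h => huz h.symm⟩
    rcases fin2cases (c v u) with h0 | h0
    · have hcy := F0 u ⟨hadj, h0⟩ huq
      exact Or.inr (Or.inl ⟨⟨Ne.symm huy, by rw [hmyq]; exact Ne.symm huq⟩,
        (hc y u).trans hcy⟩)
    · have hcq := F1 u ⟨hadj, h0⟩ huy
      exact Or.inr (Or.inr (Or.inr ⟨⟨Ne.symm huq, by rw [hmq]; exact Ne.symm huy⟩,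
        (hc q u).trans hcq⟩))
  rcases fin2cases (c (m v) y) with czy | czy
  swap
  · exact staryq (Or.inl czy)
  rcases fin2cases (c (m v) q) with czq | czq
  · exact staryq (Or.inr czq)
  -- now `c (m v) y = 0` and `c (m v) q = 1`
  by_cases hA0 : ∀ w, adjC m c 0 v w → w ≠ q → c w (m v) = 1
  · -- two blue stars at `v` and `m v`
    apply goal_of_stars hm hc 1 1 v (m v)
    intro u
    by_cases h1 : u = v
    · exact Or.inl h1
    by_cases h2 : u = m v
    · exact Or.inr (Or.inr (Or.inl h2))
    have hadj : v ≠ u ∧ m v ≠ u := ⟨Ne.symm h1, fun h => h2 h.symm⟩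
    rcases fin2cases (c v u) with h0 | h0
    · by_cases huq : u = q
      · rw [huq]
        exact Or.inr (Or.inr (Or.inr ⟨⟨fun h => hqz h.symm, by rw [hm]; exact hvq⟩, czq⟩))
      · have hz := hA0 u ⟨hadj, h0⟩ huq
        exact Or.inr (Or.inr (Or.inr ⟨⟨hadj.2, by rw [hm]; exact hadj.1⟩,
          (hc (m v) u).trans hz⟩))
    · exact Or.inr (Or.inl ⟨hadj, h0⟩)
  by_cases hB1 : ∀ w, adjC m c 1 v w → w ≠ y → c w (m v) = 0
  · -- two red stars at `v` and `m v`
    apply goal_of_stars hm hc 0 0 v (m v)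
    intro u
    by_cases h1 : u = v
    · exact Or.inl h1
    by_cases h2 : u = m v
    · exact Or.inr (Or.inr (Or.inl h2))
    have hadj : v ≠ u ∧ m v ≠ u := ⟨Ne.symm h1, fun h => h2 h.symm⟩
    rcases fin2cases (c v u) with h0 | h0
    · exact Or.inr (Or.inl ⟨hadj, h0⟩)
    · by_cases huy : u = y
      · rw [huy]
        exact Or.inr (Or.inr (Or.inr ⟨⟨fun h => hyz h.symm, by rw [hm]; exact hvy⟩, czy⟩))
      · have hz := hB1 u ⟨hadj, h0⟩ huy
        exact Or.inr (Or.inr (Or.inr ⟨⟨hadj.2, by rw [hm]; exact hadj.1⟩,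
          (hc (m v) u).trans hz⟩))
  by_cases hB0 : ∀ w, adjC m c 0 v w → w ≠ q → c w (m v) = 0
  · -- two red stars at `m v` and `q`
    apply goal_of_stars hm hc 0 0 (m v) q
    intro u
    by_cases h2 : u = m v
    · exact Or.inl h2
    by_cases huq : u = q
    · exact Or.inr (Or.inr (Or.inl huq))
    by_cases h1 : u = v
    · rw [h1]
      exact Or.inr (Or.inr (Or.inr ⟨⟨Ne.symm hvq, by rw [hmq]; exact Ne.symm hvy⟩,
        (hc q v).trans cvq⟩))
    by_cases huy : u = y
    · rw [huy]
      exact Or.inr (Or.inl ⟨⟨fun h => hyz h.symm, by rw [hm]; exact hvy⟩, czy⟩)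
    have hadj : v ≠ u ∧ m v ≠ u := ⟨Ne.symm h1, fun h => h2 h.symm⟩
    rcases fin2cases (c v u) with h0 | h0
    · have hz := hB0 u ⟨hadj, h0⟩ huq
      exact Or.inr (Or.inl ⟨⟨hadj.2, by rw [hm]; exact hadj.1⟩, (hc (m v) u).trans hz⟩)
    · have hcq := F1 u ⟨hadj, h0⟩ huy
      exact Or.inr (Or.inr (Or.inr ⟨⟨Ne.symm huq, by rw [hmq]; exact Ne.symm huy⟩,
        (hc q u).trans hcq⟩))
  by_cases hA1 : ∀ w, adjC m c 1 v w → w ≠ y → c w (m v) = 1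
  · -- two blue stars at `m v` and `y`
    apply goal_of_stars hm hc 1 1 (m v) y
    intro u
    by_cases h2 : u = m v
    · exact Or.inl h2
    by_cases huy : u = y
    · exact Or.inr (Or.inr (Or.inl huy))
    by_cases h1 : u = v
    · rw [h1]
      exact Or.inr (Or.inr (Or.inr ⟨⟨Ne.symm hvy, by rw [hmyq]; exact Ne.symm hvq⟩,
        (hc y v).trans cvy⟩))
    by_cases huq : u = q
    · rw [huq]
      exact Or.inr (Or.inl ⟨⟨fun h => hqz h.symm, by rw [hm]; exact hvq⟩, czq⟩)
    have hadj : v ≠ u ∧ m v ≠ u := ⟨Ne.symm h1, fun h => h2 h.symm⟩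
    rcases fin2cases (c v u) with h0 | h0
    · have hcy := F0 u ⟨hadj, h0⟩ huq
      exact Or.inr (Or.inr (Or.inr ⟨⟨Ne.symm huy, by rw [hmyq]; exact Ne.symm huq⟩,
        (hc y u).trans hcy⟩))
    · have hz := hA1 u ⟨hadj, h0⟩ huy
      exact Or.inr (Or.inl ⟨⟨hadj.2, by rw [hm]; exact hadj.1⟩, (hc (m v) u).trans hz⟩)
  -- all four classes nonempty: two C5 blowups
  push_neg at hA0 hB1 hB0 hA1
  obtain ⟨a0, ha0v, ha0q, ha0z⟩ := hA0
  obtain ⟨b1, hb1v, hb1y, hb1z⟩ := hB1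
  obtain ⟨b0, hb0v, hb0q, hb0z⟩ := hB0
  obtain ⟨a1, ha1v, ha1y, ha1z⟩ := hA1
  replace ha0z : c a0 (m v) = 0 := by
    rcases fin2cases (c a0 (m v)) with h | h; exacts [h, (ha0z h).elim]
  replace hb1z : c b1 (m v) = 1 := by
    rcases fin2cases (c b1 (m v)) with h | h; exacts [(hb1z h).elim, h]
  replace hb0z : c b0 (m v) = 1 := by
    rcases fin2cases (c b0 (m v)) with h | h; exacts [(hb0z h).elim, h]
  replace ha1z : c a1 (m v) = 0 := by
    rcases fin2cases (c a1 (m v)) with h | h; exacts [h, (ha1z h).elim]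
  apply goal_of_c5 hm hc
    ![{v}, {w | adjC m c 0 v w ∧ w ≠ q ∧ c w (m v) = 0}, {m v},
      {w | adjC m c 1 v w ∧ w ≠ y ∧ c w (m v) = 0}, {q}]
    ![{v}, {w | adjC m c 1 v w ∧ w ≠ y ∧ c w (m v) = 1}, {m v},
      {w | adjC m c 0 v w ∧ w ≠ q ∧ c w (m v) = 1}, {y}]
    0 1
  · intro k
    fin_cases k
    · exact ⟨v, rfl⟩
    · exact ⟨a0, ha0v, ha0q, ha0z⟩
    · exact ⟨m v, rfl⟩
    · exact ⟨a1, ha1v, ha1y, ha1z⟩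
    · exact ⟨q, rfl⟩
  · apply disjoint_of_classifier _ (fun w => if w = v then (0 : Fin 5) else
      if w = m v then 2 else if c v w = 0 then (if w = q then 4 else 1) else 3)
    intro k
    fin_cases k
    · intro w hw
      have hwv : w = v := hw
      show (if w = v then (0 : Fin 5) else if w = m v then 2 else
        if c v w = 0 then (if w = q then 4 else 1) else 3) = _
      rw [if_pos hwv]
      rfl
    · rintro w ⟨⟨⟨ha, hb⟩, hcol⟩, hwq, hwz⟩
      show (if w = v then (0 : Fin 5) else if w = m v then 2 else
        if c v w = 0 then (if w = q then 4 else 1) else 3) = _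
      rw [if_neg (Ne.symm ha), if_neg (fun h => hb h.symm), if_pos hcol, if_neg hwq]
      rfl
    · intro w hw
      have hwz : w = m v := hw
      show (if w = v then (0 : Fin 5) else if w = m v then 2 else
        if c v w = 0 then (if w = q then 4 else 1) else 3) = _
      rw [if_neg (fun h => hmf v (hwz.symm.trans h)), if_pos hwz]
      rfl
    · rintro w ⟨⟨h1, h2⟩, hwy, hwz⟩
      show (if w = v then (0 : Fin 5) else if w = m v then 2 else
        if c v w = 0 then (if w = q then 4 else 1) else 3) = _
      rw [if_neg (Ne.symm h1.1), if_neg (fun h => h1.2 h.symm),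
        if_neg (fun h => absurd (h.symm.trans h2) (by decide))]
      rfl
    · intro w hw
      have hwq : w = q := hw
      show (if w = v then (0 : Fin 5) else if w = m v then 2 else
        if c v w = 0 then (if w = q then 4 else 1) else 3) = _
      rw [if_neg (fun h => hvq (h.symm.trans hwq)),
        if_neg (fun h => hqz (hwq.symm.trans h)),
        if_pos (by rw [hwq]; exact cvq), if_pos hwq]
      rfl
  · intro k
    fin_cases k
    · intro a ha b hb
      have ha' : a = v := ha
      have hb' : adjC m c 0 v b ∧ b ≠ q ∧ c b (m v) = 0 := hb
      rw [ha']; exact hb'.1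
    · intro a ha b hb
      have ha' : adjC m c 0 v a ∧ a ≠ q ∧ c a (m v) = 0 := ha
      have hb' : b = m v := hb
      rw [hb']
      exact ⟨⟨Ne.symm ha'.1.1.2, fun h => ha'.1.1.1 (hm.injective h).symm⟩, ha'.2.2⟩
    · intro a ha b hb
      have ha' : a = m v := ha
      have hb' : adjC m c 1 v b ∧ b ≠ y ∧ c b (m v) = 0 := hb
      rw [ha']
      exact ⟨⟨hb'.1.1.2, by rw [hm]; exact hb'.1.1.1⟩, (hc (m v) b).trans hb'.2.2⟩
    · intro a ha b hb
      have ha' : adjC m c 1 v a ∧ a ≠ y ∧ c a (m v) = 0 := ha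
      have hb' : b = q := hb
      rw [hb']
      refine ⟨⟨fun h => absurd ((h ▸ ha'.1.2 : c v q = 1).symm.trans cvq) (by decide),
        fun h => ha'.2.1 (by rw [← hm a, h, hmq])⟩, F1 a ha'.1 ha'.2.1⟩
    · intro a ha b hb
      have ha' : a = q := ha
      have hb' : b = v := hb
      rw [ha', hb']
      exact ⟨⟨Ne.symm hvq, by rw [hmq]; exact Ne.symm hvy⟩, (hc q v).trans cvq⟩
  · intro k
    fin_cases k
    · exact ⟨v, rfl⟩
    · exact ⟨b1, hb1v, hb1y, hb1z⟩
    · exact ⟨m v, rfl⟩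
    · exact ⟨b0, hb0v, hb0q, hb0z⟩
    · exact ⟨y, rfl⟩
  · apply disjoint_of_classifier _ (fun w => if w = v then (0 : Fin 5) else
      if w = m v then 2 else if c v w = 1 then (if w = y then 4 else 1) else 3)
    intro k
    fin_cases k
    · intro w hw
      have hwv : w = v := hw
      show (if w = v then (0 : Fin 5) else if w = m v then 2 else
        if c v w = 1 then (if w = y then 4 else 1) else 3) = _
      rw [if_pos hwv]
      rfl
    · rintro w ⟨⟨⟨ha, hb⟩, hcol⟩, hwy, hwz⟩
      show (if w = v then (0 : Fin 5) else if w = m v then 2 else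
        if c v w = 1 then (if w = y then 4 else 1) else 3) = _
      rw [if_neg (Ne.symm ha), if_neg (fun h => hb h.symm), if_pos hcol, if_neg hwy]
      rfl
    · intro w hw
      have hwz : w = m v := hw
      show (if w = v then (0 : Fin 5) else if w = m v then 2 else
        if c v w = 1 then (if w = y then 4 else 1) else 3) = _
      rw [if_neg (fun h => hmf v (hwz.symm.trans h)), if_pos hwz]
      rfl
    · rintro w ⟨⟨h1, h2⟩, hwq, hwz⟩
      show (if w = v then (0 : Fin 5) else if w = m v then 2 else
        if c v w = 1 then (if w = y then 4 else 1) else 3) = _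
      rw [if_neg (Ne.symm h1.1), if_neg (fun h => h1.2 h.symm),
        if_neg (fun h => absurd (h.symm.trans h2) (by decide))]
      rfl
    · intro w hw
      have hwy : w = y := hw
      show (if w = v then (0 : Fin 5) else if w = m v then 2 else
        if c v w = 1 then (if w = y then 4 else 1) else 3) = _
      rw [if_neg (fun h => hvy (h.symm.trans hwy)),
        if_neg (fun h => hyz (hwy.symm.trans h)),
        if_pos (by rw [hwy]; exact cvy), if_pos hwy]
      rfl
  · intro k
    fin_cases k
    · intro a ha b hb
      have ha' : a = v := ha
      have hb' : adjC m c 1 v b ∧ b ≠ y ∧ c b (m v) = 1 := hb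
      rw [ha']; exact hb'.1
    · intro a ha b hb
      have ha' : adjC m c 1 v a ∧ a ≠ y ∧ c a (m v) = 1 := ha
      have hb' : b = m v := hb
      rw [hb']
      exact ⟨⟨Ne.symm ha'.1.1.2, fun h => ha'.1.1.1 (hm.injective h).symm⟩, ha'.2.2⟩
    · intro a ha b hb
      have ha' : a = m v := ha
      have hb' : adjC m c 0 v b ∧ b ≠ q ∧ c b (m v) = 1 := hb
      rw [ha']
      exact ⟨⟨hb'.1.1.2, by rw [hm]; exact hb'.1.1.1⟩, (hc (m v) b).trans hb'.2.2⟩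
    · intro a ha b hb
      have ha' : adjC m c 0 v a ∧ a ≠ q ∧ c a (m v) = 1 := ha
      have hb' : b = y := hb
      rw [hb']
      refine ⟨⟨fun h => absurd ((h ▸ ha'.1.2 : c v y = 0).symm.trans cvy) (by decide),
        fun h => ha'.2.1 (by rw [← hm a, h, hmyq])⟩, F0 a ha'.1 ha'.2.1⟩
    · intro a ha b hb
      have ha' : a = y := ha
      have hb' : b = v := hb
      rw [ha', hb']
      exact ⟨⟨Ne.symm hvy, by rw [hmyq]; exact Ne.symm hvq⟩, (hc y v).trans cvy⟩
  · intro u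
    by_cases h1 : u = v
    · exact Or.inl ⟨0, h1⟩
    by_cases h2 : u = m v
    · exact Or.inl ⟨2, h2⟩
    have hadj : v ≠ u ∧ m v ≠ u := ⟨Ne.symm h1, fun h => h2 h.symm⟩
    rcases fin2cases (c v u) with h0 | h0
    · by_cases huq : u = q
      · exact Or.inl ⟨4, huq⟩
      rcases fin2cases (c u (m v)) with hz | hz
      · exact Or.inl ⟨1, ⟨hadj, h0⟩, huq, hz⟩
      · exact Or.inr ⟨3, ⟨hadj, h0⟩, huq, hz⟩
    · by_cases huy : u = y
      · exact Or.inr ⟨4, huy⟩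
      rcases fin2cases (c u (m v)) with hz | hz
      · exact Or.inl ⟨3, ⟨hadj, h0⟩, huy, hz⟩
      · exact Or.inr ⟨1, ⟨hadj, h0⟩, huy, hz⟩

/-- Key lemma: if a critical pair for color 1 and a critical pair for color 2
intersect, then `V` is covered by two monochromatic stars or by two
monochromatic blow-ups of `C₅`; in particular `V` is covered by two
monochromatic 2-reachable subsets. -/
theorem stmt13 {V : Type*} [Fintype V] (m : V → V)
    (hm : Function.Involutive m) (hmf : ∀ v, m v ≠ v)
    (c : V → V → Fin 2) (hc : ∀ u v, c u v = c v u)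
    (x y p q : V)
    (hecrit : critPair m c 0 x y) (hfcrit : critPair m c 1 p q)
    (hshare : x = p ∨ x = q ∨ y = p ∨ y = q) :
    ((∃ (i j : Fin 2) (u v : V), mStar m c i u ∪ mStar m c j v = Set.univ) ∨
      (∃ (A B : Set V) (i j : Fin 2), A ∪ B = Set.univ ∧
        c5Blowup m c i A ∧ c5Blowup m c j B)) ∧
    (∃ (A B : Set V) (i j : Fin 2), A ∪ B = Set.univ ∧
      reachSet m c i A ∧ reachSet m c j B) := by
  rcases hshare with h | h | h | h
  · rw [h] at hecrit
    exact cover_key m hm hmf c hc p y q hecrit hfcrit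
  · rw [h] at hecrit
    exact cover_key m hm hmf c hc q y p hecrit (critPair_symm hm hc hfcrit)
  · exact cover_key m hm hmf c hc p x q (h ▸ critPair_symm hm hc hecrit) hfcrit
  · exact cover_key m hm hmf c hc q x p (h ▸ critPair_symm hm hc hecrit)
      (critPair_symm hm hc hfcrit)
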